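/- Let f : [a,b] → ℝ be of bounded variation on [a,b]. Then |( f((3a+b)/4) + f((a+3b)/4) )/2 − (1/(b−a))∫_a^b f(t) dt| ≤ (1/(b−a)) ∫_a^{(a+b)/2} sgn((3a+b)/4 − t)·V_t^{a+b−t}(f) dt ≤ (1/4) · V_a^b(f). -/
import Mathlib


open Set

/-- Total variation of `f` on the interval `[c, d]`. -/
noncomputable def V (f : ℝ → ℝ) (c d : ℝ) : ℝ := (eVariationOn f (Set.Icc c d)).toReal

lemma evar_Icc_add (f : ℝ → ℝ) {a b c : ℝ} (hab : a ≤ b) (hbc : b ≤ c) :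
    eVariationOn f (Icc a b) + eVariationOn f (Icc b c) = eVariationOn f (Icc a c) := by
  simpa using eVariationOn.Icc_add_Icc f (s := Set.univ) hab hbc (Set.mem_univ b)

lemma V_nonneg (f : ℝ → ℝ) (c d : ℝ) : 0 ≤ V f c d := ENNReal.toReal_nonneg

lemma V_le (f : ℝ → ℝ) {c d c' d' : ℝ} (h : Icc c d ⊆ Icc c' d')
    (hfin : eVariationOn f (Icc c' d') ≠ ⊤) : V f c d ≤ V f c' d' :=
  ENNReal.toReal_mono hfin (eVariationOn.mono f h)

lemma V_add (f : ℝ → ℝ) {a b c : ℝ} (hab : a ≤ b) (hbc : b ≤ c)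
    (hfin : eVariationOn f (Icc a c) ≠ ⊤) : V f a b + V f b c = V f a c := by
  have h1 : eVariationOn f (Icc a b) ≠ ⊤ :=
    ne_top_of_le_ne_top hfin (eVariationOn.mono f (Icc_subset_Icc le_rfl hbc))
  have h2 : eVariationOn f (Icc b c) ≠ ⊤ :=
    ne_top_of_le_ne_top hfin (eVariationOn.mono f (Icc_subset_Icc hab le_rfl))
  rw [V, V, V, ← ENNReal.toReal_add h1 h2, evar_Icc_add f hab hbc]

lemma abs_sub_le_V (f : ℝ → ℝ) {c d x y : ℝ} (hf : BoundedVariationOn f (Icc c d))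
    (hx : x ∈ Icc c d) (hy : y ∈ Icc c d) : |f x - f y| ≤ V f c d := by
  have := hf.dist_le hx hy
  rwa [Real.dist_eq] at this

/-- Refined trapezoid type inequality for functions of bounded variation. -/
theorem refined_trapezoid_type_bv (a b : ℝ) (hab : a < b) (f : ℝ → ℝ)
    (hf : BoundedVariationOn f (Icc a b)) :
    |(f ((3 * a + b) / 4) + f ((a + 3 * b) / 4)) / 2 - (1 / (b - a)) * ∫ t in a..b, f t| ≤
        (1 / (b - a)) * ∫ t in a..((a + b) / 2),
          Real.sign ((3 * a + b) / 4 - t) * V f t (a + b - t) ∧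
      (1 / (b - a)) * (∫ t in a..((a + b) / 2),
          Real.sign ((3 * a + b) / 4 - t) * V f t (a + b - t)) ≤
        (1 / 4) * V f a b := by
  set m : ℝ := (a + b) / 2 with hm
  set x1 : ℝ := (3 * a + b) / 4 with hx1
  have hax1 : a < x1 := by linarith
  have hx1m : x1 < m := by rw [hx1, hm]; linarith
  have hmb : m < b := by rw [hm]; linarith
  have ham : a < m := hax1.trans hx1m
  have hx2 : (a + 3 * b) / 4 = a + b - x1 := by rw [hx1]; ring
  have hmm : a + b - m = m := by rw [hm]; ring
  have hfin : eVariationOn f (Icc a b) ≠ ⊤ := hf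
  -- subinterval finiteness
  have hfinsub : ∀ {c d : ℝ}, a ≤ c → d ≤ b → eVariationOn f (Icc c d) ≠ ⊤ := by
    intro c d hc hd
    exact ne_top_of_le_ne_top hfin (eVariationOn.mono f (Icc_subset_Icc hc hd))
  -- integrability of f
  have hfint : IntervalIntegrable f MeasureTheory.volume a b := by
    obtain ⟨p, q, hp, hq, hpq⟩ := hf.locallyBoundedVariationOn.exists_monotoneOn_sub_monotoneOn
    have hu : uIcc a b = Icc a b := uIcc_of_le hab.le
    have hp' : MonotoneOn p (uIcc a b) := by rwa [hu]
    have hq' : MonotoneOn q (uIcc a b) := by rwa [hu]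
    have h1 : IntervalIntegrable p MeasureTheory.volume a b := hp'.intervalIntegrable
    have h2 : IntervalIntegrable q MeasureTheory.volume a b := hq'.intervalIntegrable
    rw [hpq]
    exact h1.sub h2
  have hfam : IntervalIntegrable f MeasureTheory.volume a m :=
    hfint.mono_set (by rw [uIcc_of_le ham.le, uIcc_of_le hab.le]
                       exact Icc_subset_Icc le_rfl hmb.le)
  have hfmb : IntervalIntegrable f MeasureTheory.volume m b :=
    hfint.mono_set (by rw [uIcc_of_le hmb.le, uIcc_of_le hab.le]
                       exact Icc_subset_Icc ham.le le_rfl)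
  have hfcomp : IntervalIntegrable (fun t => f (a + b - t)) MeasureTheory.volume a m := by
    have := hfmb.comp_sub_left (a + b)
    have e1 : a + b - b = a := by ring
    rw [e1, hmm] at this
    exact this.symm
  -- the symmetrized function
  set F : ℝ → ℝ := fun t => f t + f (a + b - t) with hF
  set c : ℝ := f x1 + f (a + b - x1) with hc
  have hFam : IntervalIntegrable F MeasureTheory.volume a m := hfam.add hfcomp
  have hDam : IntervalIntegrable (fun t => c - F t) MeasureTheory.volume a m :=
    intervalIntegrable_const.sub hFam
  have hDax1 : IntervalIntegrable (fun t => c - F t) MeasureTheory.volume a x1 :=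
    hDam.mono_set (by rw [uIcc_of_le hax1.le, uIcc_of_le ham.le]
                      exact Icc_subset_Icc le_rfl hx1m.le)
  have hDx1m : IntervalIntegrable (fun t => c - F t) MeasureTheory.volume x1 m :=
    hDam.mono_set (by rw [uIcc_of_le hx1m.le, uIcc_of_le ham.le]
                      exact Icc_subset_Icc hax1.le le_rfl)
  -- integral of f over [a,b] equals integral of F over [a,m]
  have hcompint : ∫ t in a..m, f (a + b - t) = ∫ t in m..b, f t := by
    rw [intervalIntegral.integral_comp_sub_left f (a + b)]
    have e1 : a + b - a = b := by ring
    rw [e1, hmm]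
  have I0 : ∫ t in a..b, f t = ∫ t in a..m, F t := by
    rw [← intervalIntegral.integral_add_adjacent_intervals hfam hfmb]
    rw [hF, intervalIntegral.integral_add hfam hfcomp, hcompint]
  -- key representation
  have key : (f x1 + f (a + b - x1)) / 2 - (1 / (b - a)) * ∫ t in a..b, f t
      = (1 / (b - a)) * ∫ t in a..m, (c - F t) := by
    rw [intervalIntegral.integral_sub intervalIntegrable_const hFam,
      intervalIntegral.integral_const, ← I0, smul_eq_mul, hc, hm]
    have hba : b - a ≠ 0 := sub_ne_zero.mpr hab.ne'
    field_simp
    ring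
  -- antitonicity of t ↦ V f t (a+b-t) on [a, m]
  have hanti : AntitoneOn (fun t => V f t (a + b - t)) (Icc a m) := by
    intro s hs t ht hst
    have h1 : a ≤ s := hs.1
    have h2 : s ≤ m := hs.2
    exact V_le f (Icc_subset_Icc hst (by linarith)) (hfinsub h1 (by linarith))
  have hh1 : IntervalIntegrable (fun t => V f t (a + b - t)) MeasureTheory.volume a x1 := by
    apply AntitoneOn.intervalIntegrable
    apply hanti.mono
    rw [uIcc_of_le hax1.le]
    exact Icc_subset_Icc le_rfl hx1m.le
  have hh2 : IntervalIntegrable (fun t => V f t (a + b - t)) MeasureTheory.volume x1 m := by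
    apply AntitoneOn.intervalIntegrable
    apply hanti.mono
    rw [uIcc_of_le hx1m.le]
    exact Icc_subset_Icc hax1.le le_rfl
  -- a.e. t ≠ x1
  have hx1ae : ∀ᵐ t : ℝ, t ≠ x1 := by
    have hs : {t : ℝ | ¬ t ≠ x1} = {x1} := by ext t; simp
    rw [MeasureTheory.ae_iff, hs]
    exact Real.volume_singleton
  -- sign computations on the two halves
  have I1 : ∫ t in a..x1, Real.sign (x1 - t) * V f t (a + b - t)
      = ∫ t in a..x1, V f t (a + b - t) := by
    apply intervalIntegral.integral_congr_ae
    filter_upwards [hx1ae] with t ht htm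
    rw [uIoc_of_le hax1.le] at htm
    have : 0 < x1 - t := by
      rcases lt_or_eq_of_le htm.2 with h | h
      · linarith
      · exact absurd h ht
    rw [Real.sign_of_pos this, one_mul]
  have I2 : ∫ t in x1..m, Real.sign (x1 - t) * V f t (a + b - t)
      = - ∫ t in x1..m, V f t (a + b - t) := by
    rw [← intervalIntegral.integral_neg]
    apply intervalIntegral.integral_congr_ae
    filter_upwards with t htm
    rw [uIoc_of_le hx1m.le] at htm
    have h0 : x1 - t < 0 := by linarith [htm.1]
    simp only [Pi.neg_apply, Real.sign_of_neg h0, neg_one_mul]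
  -- integrability of the sign-weighted integrand
  have hsg1 : IntervalIntegrable (fun t => Real.sign (x1 - t) * V f t (a + b - t))
      MeasureTheory.volume a x1 := by
    rw [intervalIntegrable_iff_integrableOn_Ioc_of_le hax1.le] at hh1 ⊢
    apply hh1.congr
    filter_upwards [MeasureTheory.ae_restrict_mem measurableSet_Ioc,
      MeasureTheory.ae_restrict_of_ae hx1ae] with t htm ht
    have : 0 < x1 - t := by
      rcases lt_or_eq_of_le htm.2 with h | h
      · linarith
      · exact absurd h ht
    rw [Real.sign_of_pos this, one_mul]
  have hsg2 : IntervalIntegrable (fun t => Real.sign (x1 - t) * V f t (a + b - t))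
      MeasureTheory.volume x1 m := by
    rw [intervalIntegrable_iff_integrableOn_Ioc_of_le hx1m.le] at hh2 ⊢
    apply hh2.neg.congr
    filter_upwards [MeasureTheory.ae_restrict_mem measurableSet_Ioc] with t htm
    have : x1 - t < 0 := by linarith [htm.1]
    rw [Real.sign_of_neg this, neg_one_mul]
    rfl
  have Ssplit : ∫ t in a..m, Real.sign (x1 - t) * V f t (a + b - t)
      = (∫ t in a..x1, V f t (a + b - t)) - ∫ t in x1..m, V f t (a + b - t) := by
    rw [← intervalIntegral.integral_add_adjacent_intervals hsg1 hsg2, I1, I2]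
    ring
  -- pointwise bounds
  have bound1 : ∀ t ∈ Icc a x1, |c - F t| ≤ V f t (a + b - t) - V f x1 (a + b - x1) := by
    intro t ht
    have h1 : t ≤ x1 := ht.2
    have h2 : a ≤ t := ht.1
    have hx1le : x1 ≤ a + b - x1 := by linarith
    have htle : a + b - x1 ≤ a + b - t := by linarith
    have e1 : V f t x1 + V f x1 (a + b - t) = V f t (a + b - t) :=
      V_add f h1 (le_trans hx1le htle) (hfinsub h2 (by linarith))
    have e2 : V f x1 (a + b - x1) + V f (a + b - x1) (a + b - t) = V f x1 (a + b - t) :=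
      V_add f hx1le htle (hfinsub (by linarith) (by linarith))
    have b1 : |f x1 - f t| ≤ V f t x1 :=
      abs_sub_le_V f (hf.mono (Icc_subset_Icc h2 (by linarith)))
        ⟨h1, le_rfl⟩ ⟨le_rfl, h1⟩
    have b2 : |f (a + b - x1) - f (a + b - t)| ≤ V f (a + b - x1) (a + b - t) :=
      abs_sub_le_V f (hf.mono (Icc_subset_Icc (by linarith) (by linarith)))
        ⟨le_rfl, htle⟩ ⟨htle, le_rfl⟩
    have : |c - F t| ≤ |f x1 - f t| + |f (a + b - x1) - f (a + b - t)| := by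
      rw [hc, hF]
      have : f x1 + f (a + b - x1) - (f t + f (a + b - t))
          = (f x1 - f t) + (f (a + b - x1) - f (a + b - t)) := by ring
      rw [this]
      exact abs_add_le _ _
    linarith
  have bound2 : ∀ t ∈ Icc x1 m, |c - F t| ≤ V f x1 (a + b - x1) - V f t (a + b - t) := by
    intro t ht
    have h1 : x1 ≤ t := ht.1
    have h2 : t ≤ m := ht.2
    have htle : t ≤ a + b - t := by linarith
    have htle2 : a + b - t ≤ a + b - x1 := by linarith
    have e1 : V f x1 t + V f t (a + b - x1) = V f x1 (a + b - x1) :=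
      V_add f h1 (le_trans htle htle2) (hfinsub (by linarith) (by linarith))
    have e2 : V f t (a + b - t) + V f (a + b - t) (a + b - x1) = V f t (a + b - x1) :=
      V_add f htle htle2 (hfinsub (by linarith) (by linarith))
    have b1 : |f x1 - f t| ≤ V f x1 t :=
      abs_sub_le_V f (hf.mono (Icc_subset_Icc (by linarith) (by linarith)))
        ⟨le_rfl, h1⟩ ⟨h1, le_rfl⟩
    have b2 : |f (a + b - x1) - f (a + b - t)| ≤ V f (a + b - t) (a + b - x1) :=
      abs_sub_le_V f (hf.mono (Icc_subset_Icc (by linarith) (by linarith)))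
        ⟨htle2, le_rfl⟩ ⟨le_rfl, htle2⟩
    have : |c - F t| ≤ |f x1 - f t| + |f (a + b - x1) - f (a + b - t)| := by
      rw [hc, hF]
      have : f x1 + f (a + b - x1) - (f t + f (a + b - t))
          = (f x1 - f t) + (f (a + b - x1) - f (a + b - t)) := by ring
      rw [this]
      exact abs_add_le _ _
    linarith
  -- integral of |c - F| bounded by S
  have hmid : ∫ t in a..m, |c - F t| ≤
      (∫ t in a..x1, V f t (a + b - t)) - ∫ t in x1..m, V f t (a + b - t) := by
    have split : ∫ t in a..m, |c - F t|
        = (∫ t in a..x1, |c - F t|) + ∫ t in x1..m, |c - F t| :=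
      (intervalIntegral.integral_add_adjacent_intervals hDax1.abs hDx1m.abs).symm
    have m1 : ∫ t in a..x1, |c - F t|
        ≤ ∫ t in a..x1, (V f t (a + b - t) - V f x1 (a + b - x1)) :=
      intervalIntegral.integral_mono_on hax1.le hDax1.abs
        (hh1.sub intervalIntegrable_const) bound1
    have m2 : ∫ t in x1..m, |c - F t|
        ≤ ∫ t in x1..m, (V f x1 (a + b - x1) - V f t (a + b - t)) :=
      intervalIntegral.integral_mono_on hx1m.le hDx1m.abs
        (intervalIntegrable_const.sub hh2) bound2
    rw [intervalIntegral.integral_sub hh1 intervalIntegrable_const] at m1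
    rw [intervalIntegral.integral_sub intervalIntegrable_const hh2] at m2
    rw [intervalIntegral.integral_const, smul_eq_mul] at m1 m2
    have hlen : m - x1 = x1 - a := by rw [hm, hx1]; ring
    rw [hlen] at m2
    rw [split]
    linarith
  have hba : (0:ℝ) < b - a := by linarith
  have hbainv : (0:ℝ) ≤ 1 / (b - a) := by positivity
  constructor
  · rw [hx2, key, Ssplit, abs_mul, abs_of_nonneg hbainv]
    apply mul_le_mul_of_nonneg_left _ hbainv
    calc |∫ t in a..m, (c - F t)| ≤ ∫ t in a..m, |c - F t| :=
          intervalIntegral.abs_integral_le_integral_abs ham.le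
      _ ≤ _ := hmid
  · rw [Ssplit]
    have hS2 : 0 ≤ ∫ t in x1..m, V f t (a + b - t) :=
      intervalIntegral.integral_nonneg hx1m.le (fun t _ => V_nonneg f _ _)
    have hS1 : ∫ t in a..x1, V f t (a + b - t) ≤ (x1 - a) * V f a b := by
      have := intervalIntegral.integral_mono_on hax1.le hh1 intervalIntegrable_const
        (fun t ht => V_le f (Icc_subset_Icc ht.1 (by
          have h1 := ht.1; have h2 := ht.2; linarith)) hfin)
      rwa [intervalIntegral.integral_const, smul_eq_mul] at this
    have hlen : x1 - a = (b - a) / 4 := by rw [hx1]; ring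
    rw [hlen] at hS1
    have : (1 / (b - a)) * ((∫ t in a..x1, V f t (a + b - t))
        - ∫ t in x1..m, V f t (a + b - t)) ≤ (1 / (b - a)) * ((b - a) / 4 * V f a b) := by
      apply mul_le_mul_of_nonneg_left _ hbainv
      linarith
    calc (1 / (b - a)) * _ ≤ (1 / (b - a)) * ((b - a) / 4 * V f a b) := this
      _ = (1 / 4) * V f a b := by field_simp
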